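/- arXiv:0910.0682 — 3 statements merged into one kernel-verified Lean document; each statement's English description precedes it below -/
import Mathlib

section
/- Let (Ω,S) be a schurian scheme that is equivalenced of valency k > 1 with indistinguishing number c(s) = k−1 for all s ∈ S# (i.e. pseudocyclic of valency k), and suppose its rank |S| is greater than 2(k−1). Then the automorphism group Aut(Ω,S) = {f ∈ Sym(Ω) : s^f = s for all s ∈ S} is a Frobenius group, and S is the set of orbits of Aut(Ω,S) on Ω×Ω; in particular (Ω,S) is a Frobenius scheme. -/
open scoped Classical

namespace AS

variable {Ω : Type*}

/-- The diagonal relation `1_Ω`. -/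
def diagRel (Ω : Type*) : Set (Ω × Ω) := {p | p.1 = p.2}

/-- The converse `s*` of a relation. -/
def conv (s : Set (Ω × Ω)) : Set (Ω × Ω) := {p | (p.2, p.1) ∈ s}

/-- Composition `r ∘ s` of relations. -/
def comp (r s : Set (Ω × Ω)) : Set (Ω × Ω) :=
  {p | ∃ β, (p.1, β) ∈ r ∧ (β, p.2) ∈ s}

/-- `αs = {β | (α, β) ∈ s}`. -/
def pointSet (α : Ω) (s : Set (Ω × Ω)) : Set Ω := {β | (α, β) ∈ s}

/-- The number of `β` with `(p.1, β) ∈ r` and `(β, p.2) ∈ s`. -/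
noncomputable def pNum (r s : Set (Ω × Ω)) (p : Ω × Ω) : ℕ :=
  Set.ncard {β | (p.1, β) ∈ r ∧ (β, p.2) ∈ s}

/-- A coherent configuration on `Ω`. -/
structure IsCC (S : Set (Set (Ω × Ω))) : Prop where
  cover : ∀ p : Ω × Ω, ∃ s ∈ S, p ∈ s
  disjoint : ∀ s ∈ S, ∀ t ∈ S, (s ∩ t).Nonempty → s = t
  nonempty : ∀ s ∈ S, s.Nonempty
  diag_union : ∀ s ∈ S, (s ∩ diagRel Ω).Nonempty → s ⊆ diagRel Ω
  conv_mem : ∀ s ∈ S, conv s ∈ S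
  inter_indep : ∀ r ∈ S, ∀ s ∈ S, ∀ t ∈ S, ∀ p ∈ t, ∀ q ∈ t, pNum r s p = pNum r s q

/-- A (homogeneous) scheme. -/
def IsScheme (S : Set (Set (Ω × Ω))) : Prop := IsCC S ∧ diagRel Ω ∈ S

/-- The intersection number `c_{rs}^t` (for `t` a nonempty class this is well defined). -/
noncomputable def cNum (r s t : Set (Ω × Ω)) : ℕ :=
  if h : t.Nonempty then pNum r s h.choose else 0

/-- The indistinguishing number `c(s) = Σ_{t ∈ S} c_{t t*}^s`. -/
noncomputable def indis (S : Set (Set (Ω × Ω))) (s : Set (Ω × Ω)) : ℕ :=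
  ∑ᶠ t ∈ S, cNum t (conv t) s

/-- Equivalenced of valency `k`. -/
def IsEquivalenced (S : Set (Set (Ω × Ω))) (k : ℕ) : Prop :=
  ∀ s ∈ S, s ≠ diagRel Ω → ∀ α : Ω, (pointSet α s).ncard = k

/-- Commutativity of a scheme: `c_{rs}^t = c_{sr}^t`. -/
def IsCommutativeCC (S : Set (Set (Ω × Ω))) : Prop :=
  ∀ r ∈ S, ∀ s ∈ S, ∀ t ∈ S, cNum r s t = cNum s r t

/-- The splitting set `D(u,v)`. -/
def splitting (S : Set (Set (Ω × Ω))) (u v : Set (Ω × Ω)) : Set (Set (Ω × Ω)) :=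
  {w | w ∈ S ∧ w ≠ diagRel Ω ∧
    ∀ t ∈ S, t ⊆ comp (comp u (conv u)) (comp v (conv v)) →
      t ⊆ comp w (conv w) → t = diagRel Ω}

section Matrices

variable [Fintype Ω]

/-- Adjacency matrix of a relation. -/
noncomputable def adjMat (s : Set (Ω × Ω)) : Matrix Ω Ω ℂ :=
  Matrix.of fun a b => if (a, b) ∈ s then 1 else 0

/-- The adjacency algebra `ℂS` (as a submodule of matrices). -/
noncomputable def adjAlg (S : Set (Set (Ω × Ω))) : Submodule ℂ (Matrix Ω Ω ℂ) :=
  Submodule.span ℂ (adjMat '' S)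

/-- Central idempotent of the adjacency algebra. -/
def IsCentralIdem (S : Set (Set (Ω × Ω))) (P : Matrix Ω Ω ℂ) : Prop :=
  P ∈ adjAlg S ∧ P * P = P ∧ ∀ A ∈ adjAlg S, P * A = A * P

/-- Central primitive idempotent of the adjacency algebra. -/
def IsCPI (S : Set (Set (Ω × Ω))) (P : Matrix Ω Ω ℂ) : Prop :=
  IsCentralIdem S P ∧ P ≠ 0 ∧
  ∀ Q R : Matrix Ω Ω ℂ, IsCentralIdem S Q → IsCentralIdem S R →
    Q ≠ 0 → R ≠ 0 → Q * R = 0 → P ≠ Q + R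

/-- The principal idempotent `P₀ = |Ω|⁻¹ J`. -/
noncomputable def P0 (Ω : Type*) [Fintype Ω] : Matrix Ω Ω ℂ :=
  (Fintype.card Ω : ℂ)⁻¹ • Matrix.of fun _ _ => (1 : ℂ)

/-- `n_P`, the positive integer with `n_P² = dim_ℂ (P·ℂS)`. -/
noncomputable def nP (S : Set (Set (Ω × Ω))) (P : Matrix Ω Ω ℂ) : ℕ :=
  Nat.sqrt (Module.finrank ℂ (Submodule.map (LinearMap.mulLeft ℂ P) (adjAlg S)))

/-- `m_P = rank(P)/n_P`. -/
noncomputable def mP (S : Set (Set (Ω × Ω))) (P : Matrix Ω Ω ℂ) : ℕ :=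
  P.rank / nP S P

/-- Pseudocyclic: `m_P/n_P` is the same for all central primitive idempotents `P ≠ P₀`. -/
def IsPseudocyclic (S : Set (Set (Ω × Ω))) : Prop :=
  ∀ P Q : Matrix Ω Ω ℂ, IsCPI S P → IsCPI S Q → P ≠ P0 Ω → Q ≠ P0 Ω →
    (mP S P : ℚ) * (nP S Q : ℚ) = (mP S Q : ℚ) * (nP S P : ℚ)

end Matrices

/-- The set of orbits of `G` on `Ω × Ω` (componentwise action): the scheme of `G`. -/
def orbitScheme (G : Type*) (Ω : Type*) [Group G] [MulAction G Ω] : Set (Set (Ω × Ω)) :=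
  Set.range fun p : Ω × Ω => MulAction.orbit G p

/-- A Frobenius permutation group: transitive, non-regular, trivial two-point stabilizers. -/
def IsFrobenius (G : Type*) (Ω : Type*) [Group G] [MulAction G Ω] : Prop :=
  MulAction.IsPretransitive G Ω ∧
  (∃ g : G, g ≠ 1 ∧ ∃ ω : Ω, g • ω = ω) ∧
  ∀ g : G, ∀ a b : Ω, a ≠ b → g • a = a → g • b = b → g = 1

/-- Schurian scheme: the orbit scheme of some permutation group on `Ω`. -/
def IsSchurian (S : Set (Set (Ω × Ω))) : Prop :=
  ∃ G : Subgroup (Equiv.Perm Ω), S = orbitScheme G Ω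

/-- Algebraic isomorphism of coherent configurations. -/
def IsAlgIso {Ω' : Type*} (S : Set (Set (Ω × Ω))) (S' : Set (Set (Ω' × Ω')))
    (φ : Set (Ω × Ω) → Set (Ω' × Ω')) : Prop :=
  Set.BijOn φ S S' ∧
  ∀ r ∈ S, ∀ s ∈ S, ∀ t ∈ S, cNum (φ r) (φ s) (φ t) = cNum r s t

/-- Separability of a coherent configuration. -/
def IsSeparable {Ω : Type u} (S : Set (Set (Ω × Ω))) : Prop :=
  ∀ (Ω' : Type u) (S' : Set (Set (Ω' × Ω'))), IsCC S' →
    ∀ φ : Set (Ω × Ω) → Set (Ω' × Ω'), IsAlgIso S S' φ →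
      ∃ f : Ω → Ω', Function.Bijective f ∧
        ∀ s ∈ S, φ s = (fun p : Ω × Ω => (f p.1, f p.2)) '' s

/-- `T` refines `S`: every class of `S` is a union of classes of `T`. -/
def Refines (T S : Set (Set (Ω × Ω))) : Prop :=
  ∀ t ∈ T, ∀ s ∈ S, (t ∩ s).Nonempty → t ⊆ s

/-- `T` is the `α`-extension of `S`. -/
def IsExtension (S : Set (Set (Ω × Ω))) (α : Ω) (T : Set (Set (Ω × Ω))) : Prop :=
  IsCC T ∧ ({(α, α)} : Set (Ω × Ω)) ∈ T ∧ Refines T S ∧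
    ∀ T' : Set (Set (Ω × Ω)), IsCC T' → ({(α, α)} : Set (Ω × Ω)) ∈ T' →
      Refines T' S → Refines T' T

/-- Semiregular coherent configuration: `|αs| ≤ 1`. -/
def IsSemiregular (T : Set (Set (Ω × Ω))) : Prop :=
  ∀ t ∈ T, ∀ β : Ω, (pointSet β t).Subsingleton

/-- `1_Δ`, the diagonal of a subset. -/
def diagOn (Δ : Set Ω) : Set (Ω × Ω) := {p | p.1 = p.2 ∧ p.1 ∈ Δ}

/-- `C` is a partition of `A`. -/
def IsPartitionOf {X : Type*} (C : Set (Set X)) (A : Set X) : Prop :=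
  (∀ c ∈ C, c.Nonempty) ∧ (∀ c ∈ C, c ⊆ A) ∧ (∀ p ∈ A, ∃ c ∈ C, p ∈ c) ∧
  ∀ c ∈ C, ∀ d ∈ C, (c ∩ d).Nonempty → c = d

/-- `S(x,y) = {s ∩ (α₀x × α₀y) : s ∈ S, s ⊆ x*∘y}`. -/
def localS (S : Set (Set (Ω × Ω))) (α₀ : Ω) (x y : Set (Ω × Ω)) : Set (Set (Ω × Ω)) :=
  {r | ∃ s ∈ S, s ⊆ comp (conv x) y ∧ r = s ∩ (pointSet α₀ x ×ˢ pointSet α₀ y)}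

/-- `S(x,y;w) = S(x,w)·S(w,y)`. -/
def localSW (S : Set (Set (Ω × Ω))) (α₀ : Ω) (x y w : Set (Ω × Ω)) : Set (Set (Ω × Ω)) :=
  {r | ∃ a ∈ localS S α₀ x w, ∃ b ∈ localS S α₀ w y, r = comp a b}

/-!
Since `S` is schurian, every class is an orbit of `Aut(Ω, S)`, so this group is transitive with
orbital scheme `S`, and a point stabilizer is transitive on each `αs`, which has `k ≥ 2` points.

A nontrivial automorphism `g` fixes at most `c(s) = k - 1` points, where `s` is the class of
`(δ, g δ)` for a point `δ` moved by `g`: a fixed point `γ` lies in `{β | (δ, β), (g δ, β) ∈ t}` for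
the class `t` of `(δ, γ)`. If `g ≠ 1` fixed two points `a ≠ b`, the stabilizer `H` of `a` would have
order `m ≥ 2k`. Burnside's lemma for `H`, which has at least `r = |S|` orbits, together with
`|Ω| ≤ 1 + (r - 1) k` and the fixed-point bound gives `r m ≤ 1 + (r - 1) k + (m - 1) (k - 1)`,
which is impossible when `r > 2 (k - 1)`.
-/

open MulAction

open scoped Pointwise

section OrbitScheme

variable {G : Type*} [Group G] [MulAction G Ω] {s : Set (Ω × Ω)}

theorem orbit_eq_of_mem_orbitScheme (hs : s ∈ orbitScheme G Ω) {p : Ω × Ω} (hp : p ∈ s) :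
    orbit G p = s := by
  obtain ⟨q, rfl⟩ := hs
  exact orbit_eq_iff.mpr hp

theorem smul_mem_of_mem_orbitScheme (hs : s ∈ orbitScheme G Ω) (g : G) {p : Ω × Ω}
    (hp : p ∈ s) : g • p ∈ s := by
  rw [← orbit_eq_of_mem_orbitScheme hs hp]
  exact mem_orbit p g

theorem isPretransitive_of_diagRel_mem_orbitScheme (h : diagRel Ω ∈ orbitScheme G Ω) :
    IsPretransitive G Ω := by
  refine ⟨fun x y => ?_⟩
  have hxy : (y, y) ∈ orbit G (x, x) := by
    rw [orbit_eq_of_mem_orbitScheme h (show (x, x) ∈ diagRel Ω from rfl)]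
    rfl
  obtain ⟨g, hg⟩ := hxy
  exact ⟨g, congrArg Prod.fst hg⟩

theorem orbit_stabilizer_eq_pointSet (a b : Ω) :
    orbit (stabilizer G a) b = pointSet a (orbit G (a, b)) := by
  ext c
  constructor
  · rintro ⟨h, rfl⟩
    exact ⟨h, Prod.ext h.2 rfl⟩
  · rintro ⟨g, hg⟩
    exact ⟨⟨g, congrArg Prod.fst hg⟩, congrArg Prod.snd hg⟩

theorem exists_ne_one_smul_eq_self [Finite Ω] (hs : s ∈ orbitScheme G Ω) {a : Ω}
    (h : 1 < (pointSet a s).ncard) : ∃ g : G, g ≠ 1 ∧ g • a = a := by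
  obtain ⟨b, hb, c, hc, hbc⟩ := (Set.one_lt_ncard).mp h
  rw [← orbit_eq_of_mem_orbitScheme hs hb, ← orbit_stabilizer_eq_pointSet] at hc
  obtain ⟨g, rfl⟩ := hc
  exact ⟨g, fun hg => hbc (show b = (g : G) • b by rw [hg, one_smul]), g.2⟩

theorem ncard_orbitScheme_le_card_orbits_stabilizer [Finite Ω] [IsPretransitive G Ω] (a : Ω) :
    (orbitScheme G Ω).ncard ≤ Nat.card (orbitRel.Quotient (stabilizer G a) Ω) := by
  let F : orbitRel.Quotient (stabilizer G a) Ω → orbitScheme G Ω :=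
    Quotient.lift (fun b => ⟨orbit G (a, b), (a, b), rfl⟩) fun b c ⟨h, hc⟩ => by
      refine Subtype.ext (orbit_eq_iff.mpr ⟨h, ?_⟩)
      rw [← hc]
      exact Prod.ext h.2 rfl
  have hF : Function.Surjective F := by
    rintro ⟨_, ⟨x, y⟩, rfl⟩
    obtain ⟨g, hg⟩ := exists_smul_eq G x a
    exact ⟨⟦g • y⟧, Subtype.ext (orbit_eq_iff.mpr ⟨g, Prod.ext hg rfl⟩)⟩
  rw [← Nat.card_coe_set_eq]
  exact Nat.card_le_card_of_surjective F hF

end OrbitScheme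

section Automorphisms

/-- `Aut(Ω, S)`, with `Equiv.Perm Ω` acting on relations through its componentwise action on
`Ω × Ω`. -/
def autGroup (S : Set (Set (Ω × Ω))) : Subgroup (Equiv.Perm Ω) :=
  ⨅ s ∈ S, stabilizer (Equiv.Perm Ω) s

variable {S : Set (Set (Ω × Ω))}

theorem mem_autGroup {f : Equiv.Perm Ω} :
    f ∈ autGroup S ↔ ∀ s ∈ S, (fun p : Ω × Ω => (f p.1, f p.2)) '' s = s := by
  simp only [autGroup, Subgroup.mem_iInf, mem_stabilizer_iff]
  rfl

theorem smul_mem_of_mem_autGroup {f : Equiv.Perm Ω} (hf : f ∈ autGroup S) {s : Set (Ω × Ω)}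
    (hs : s ∈ S) {p : Ω × Ω} (hp : p ∈ s) : f • p ∈ s := by
  rw [← show f • s = s from mem_autGroup.mp hf s hs]
  exact Set.smul_mem_smul_set hp

variable {G : Subgroup (Equiv.Perm Ω)}

theorem le_autGroup (hG : orbitScheme G Ω = S) : G ≤ autGroup S := by
  intro f hf
  rw [mem_autGroup]
  rintro _ hs
  obtain ⟨p, rfl⟩ := hG ▸ hs
  exact smul_orbit (⟨f, hf⟩ : G) p

theorem orbit_autGroup_eq (hG : orbitScheme G Ω = S) (p : Ω × Ω) :
    orbit (autGroup S) p = orbit G p := by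
  refine le_antisymm ?_ ?_
  · rintro _ ⟨f, rfl⟩
    exact smul_mem_of_mem_autGroup f.2 (hG ▸ ⟨p, rfl⟩) (mem_orbit_self p)
  · rintro _ ⟨g, rfl⟩
    exact ⟨⟨g, le_autGroup hG g.2⟩, rfl⟩

theorem orbitScheme_autGroup (hG : orbitScheme G Ω = S) : orbitScheme (autGroup S) Ω = S :=
  calc orbitScheme (autGroup S) Ω = orbitScheme G Ω :=
        congrArg Set.range (funext (orbit_autGroup_eq hG))
    _ = S := hG

end Automorphisms

section Counting

variable {S : Set (Set (Ω × Ω))}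

theorem IsCC.cNum_eq_pNum (hS : IsCC S) {r s t : Set (Ω × Ω)} (hr : r ∈ S) (hs : s ∈ S)
    (ht : t ∈ S) {p : Ω × Ω} (hp : p ∈ t) : cNum r s t = pNum r s p := by
  have hne : t.Nonempty := ⟨p, hp⟩
  rw [cNum, dif_pos hne]
  exact hS.inter_indep r hr s hs t ht _ hne.choose_spec p hp

theorem IsCC.ncard_fixedPoints_le_indis [Finite Ω] (hS : IsCC S) {f : Ω → Ω}
    (hf : ∀ t ∈ S, ∀ p ∈ t, (f p.1, f p.2) ∈ t) {s : Set (Ω × Ω)} (hs : s ∈ S) {δ : Ω}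
    (hδ : (δ, f δ) ∈ s) : {x | f x = x}.ncard ≤ indis S s := by
  have hsub : {x | f x = x} ⊆ ⋃ t ∈ S, {β | (δ, β) ∈ t ∧ (β, f δ) ∈ conv t} := by
    intro γ hγ
    obtain ⟨t, ht, hδγ⟩ := hS.cover (δ, γ)
    refine Set.mem_biUnion ht ⟨hδγ, ?_⟩
    have hfδγ := hf t ht _ hδγ
    rwa [show f γ = γ from hγ] at hfδγ
  calc {x | f x = x}.ncard
      ≤ (⋃ t ∈ S, {β | (δ, β) ∈ t ∧ (β, f δ) ∈ conv t}).ncard := Set.ncard_le_ncard hsub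
    _ ≤ ∑ᶠ t ∈ S, pNum t (conv t) (δ, f δ) := (Set.toFinite S).ncard_biUnion_le _
    _ = indis S s :=
      finsum_mem_congr rfl fun t ht => (hS.cNum_eq_pNum ht (hS.conv_mem t ht) hs hδ).symm

theorem IsScheme.card_le_of_isEquivalenced [Finite Ω] (hS : IsScheme S) {k : ℕ}
    (heq : IsEquivalenced S k) (a : Ω) : Nat.card Ω ≤ 1 + (S.ncard - 1) * k := by
  have hT : (S \ {diagRel Ω}).Finite := Set.toFinite _
  have hcover : Set.univ ⊆ {a} ∪ ⋃ s ∈ S \ {diagRel Ω}, pointSet a s := by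
    intro b _
    obtain ⟨s, hs, hab⟩ := hS.1.cover (a, b)
    by_cases hsd : s = diagRel Ω
    · subst hsd
      exact Or.inl (Eq.symm hab)
    · exact Or.inr (Set.mem_biUnion ⟨hs, hsd⟩ hab)
  calc Nat.card Ω = (Set.univ : Set Ω).ncard := (Set.ncard_univ Ω).symm
    _ ≤ ({a} ∪ ⋃ s ∈ S \ {diagRel Ω}, pointSet a s).ncard := Set.ncard_le_ncard hcover
    _ ≤ 1 + ∑ᶠ s ∈ S \ {diagRel Ω}, (pointSet a s).ncard := by
      refine (Set.ncard_union_le _ _).trans ?_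
      rw [Set.ncard_singleton]
      gcongr
      exact hT.ncard_biUnion_le _
    _ = 1 + (S.ncard - 1) * k := by
      rw [finsum_mem_eq_finite_toFinset_sum _ hT, Finset.sum_const_nat (m := k),
        ← Set.ncard_eq_toFinset_card _ hT, Set.ncard_sdiff_singleton_of_mem hS.2]
      intro s hs
      rw [hT.mem_toFinset] at hs
      exact heq s hs.1 hs.2 a

end Counting

theorem card_orbits_mul_card_le {H : Type*} [Group H] [MulAction H Ω] [Finite H] [Finite Ω]
    {m : ℕ} (hm : ∀ h : H, h ≠ 1 → (fixedBy Ω h).ncard ≤ m) :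
    Nat.card (orbitRel.Quotient H Ω) * Nat.card H ≤ Nat.card Ω + (Nat.card H - 1) * m := by
  have := Fintype.ofFinite H
  have := Fintype.ofFinite Ω
  have := Fintype.ofFinite (orbitRel.Quotient H Ω)
  simp only [Nat.card_eq_fintype_card]
  rw [← sum_card_fixedBy_eq_card_orbits_mul_card_group,
    ← Finset.add_sum_erase _ _ (Finset.mem_univ 1)]
  gcongr
  · exact Fintype.card_subtype_le _
  · calc ∑ h ∈ Finset.univ.erase (1 : H), Fintype.card (fixedBy Ω h)
        ≤ (Finset.univ.erase (1 : H)).card • m := by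
          refine Finset.sum_le_card_nsmul _ _ _ fun h hh => ?_
          rw [← Nat.card_eq_fintype_card, Nat.card_coe_set_eq]
          exact hm h (Finset.ne_of_mem_erase hh)
      _ = (Fintype.card H - 1) * m := by
          rw [Finset.card_erase_of_mem (Finset.mem_univ _), Finset.card_univ, smul_eq_mul]

section Frobenius

variable {G : Type*} [Group G] [MulAction G Ω] {S : Set (Set (Ω × Ω))}

theorem ncard_fixedBy_le_of_orbitScheme_eq [Finite Ω] [FaithfulSMul G Ω]
    (hG : orbitScheme G Ω = S) (hS : IsCC S) {c : ℕ}
    (hindis : ∀ s ∈ S, s ≠ diagRel Ω → indis S s ≤ c) {g : G} (hg : g ≠ 1) :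
    (fixedBy Ω g).ncard ≤ c := by
  obtain ⟨δ, hδ⟩ : ∃ δ : Ω, g • δ ≠ δ := by
    by_contra! h
    exact hg (eq_of_smul_eq_smul fun x => by rw [h, one_smul])
  have hs : orbit G (δ, g • δ) ∈ S := hG ▸ ⟨_, rfl⟩
  have hsd : orbit G (δ, g • δ) ≠ diagRel Ω := fun h =>
    hδ (h ▸ mem_orbit_self (δ, g • δ) : (δ, g • δ) ∈ diagRel Ω).symm
  calc (fixedBy Ω g).ncard ≤ indis S (orbit G (δ, g • δ)) :=
        hS.ncard_fixedPoints_le_indis (f := (g • ·))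
          (fun t ht _ hp => smul_mem_of_mem_orbitScheme (hG ▸ ht) g hp) hs (mem_orbit_self _)
    _ ≤ c := hindis _ hs hsd

theorem eq_one_of_smul_eq_self_of_smul_eq_self [Finite Ω] [Finite G] [FaithfulSMul G Ω]
    (hG : orbitScheme G Ω = S) (hS : IsScheme S) {k : ℕ} (heq : IsEquivalenced S k)
    (hindis : ∀ s ∈ S, s ≠ diagRel Ω → indis S s ≤ k - 1) (hrank : 2 * (k - 1) < S.ncard)
    {g : G} {a b : Ω} (hab : a ≠ b) (ha : g • a = a) (hb : g • b = b) : g = 1 := by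
  by_contra hg
  have := isPretransitive_of_diagRel_mem_orbitScheme (hG ▸ hS.2)
  let H := stabilizer G a
  have hs : orbit G (a, b) ∈ S := hG ▸ ⟨_, rfl⟩
  have hsd : orbit G (a, b) ≠ diagRel Ω := fun h =>
    hab (h ▸ mem_orbit_self (a, b) : (a, b) ∈ diagRel Ω)
  have horbit : (orbit H b).ncard = k := by
    rw [orbit_stabilizer_eq_pointSet]
    exact heq _ hs hsd a
  have hk : 0 < k := horbit ▸ (Set.ncard_pos (Set.toFinite _)).mpr ⟨b, mem_orbit_self b⟩
  have hstab : 2 ≤ Nat.card (stabilizer H b) := by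
    have : Nontrivial (stabilizer H b) :=
      ⟨⟨⟨⟨g, ha⟩, hb⟩, 1, fun h => hg (congrArg (fun x : stabilizer H b => ((x : H) : G)) h)⟩⟩
    exact Finite.one_lt_card
  have hH : 2 * k ≤ Nat.card H := by
    rw [← (stabilizer H b).card_mul_index, index_stabilizer, horbit]
    exact Nat.mul_le_mul_right k hstab
  have hburnside := card_orbits_mul_card_le (H := H) (Ω := Ω) (m := k - 1) fun h hh =>
    ncard_fixedBy_le_of_orbitScheme_eq hG hS.1 hindis (g := (h : G)) (by simpa using hh)
  have hrank' := ncard_orbitScheme_le_card_orbits_stabilizer (G := G) a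
  rw [hG] at hrank'
  have hcard := hS.card_le_of_isEquivalenced heq a
  obtain ⟨k, rfl⟩ := Nat.exists_eq_add_one.mpr hk
  obtain ⟨r, hr⟩ : ∃ r, S.ncard = r + 1 := Nat.exists_eq_add_one.mpr (by omega)
  obtain ⟨m, hm⟩ : ∃ m, Nat.card H = m + 1 := Nat.exists_eq_add_one.mpr (by omega)
  rw [hr] at hrank hrank' hcard
  rw [hm] at hH hburnside
  simp only [Nat.add_sub_cancel] at hburnside hcard hrank
  nlinarith [Nat.mul_le_mul_right (m + 1) hrank']

end Frobenius

theorem stmt_7 {Ω : Type*} [Fintype Ω] (S : Set (Set (Ω × Ω))) (hS : IsScheme S)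
    (hschur : IsSchurian S) (k : ℕ) (hk : 1 < k) (heq : IsEquivalenced S k)
    (hindis : ∀ s ∈ S, s ≠ diagRel Ω → indis S s = k - 1)
    (hrank : 2 * (k - 1) < S.ncard) :
    ∃ G : Subgroup (Equiv.Perm Ω),
      (∀ f : Equiv.Perm Ω, f ∈ G ↔ ∀ s ∈ S, (fun p : Ω × Ω => (f p.1, f p.2)) '' s = s) ∧
      IsFrobenius G Ω ∧ S = orbitScheme G Ω := by
  obtain ⟨G₀, hG₀⟩ := hschur
  have horb : orbitScheme (autGroup S) Ω = S := orbitScheme_autGroup hG₀.symm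
  obtain ⟨s, hs, hsd⟩ := Set.exists_ne_of_one_lt_ncard (s := S) (by omega) (diagRel Ω)
  obtain ⟨⟨a, -⟩, -⟩ := hS.1.nonempty s hs
  refine ⟨autGroup S, fun f => mem_autGroup, ⟨?_, ?_, ?_⟩, horb.symm⟩
  · exact isPretransitive_of_diagRel_mem_orbitScheme (by rw [horb]; exact hS.2)
  · obtain ⟨g, hg, hga⟩ := exists_ne_one_smul_eq_self (by rw [horb]; exact hs) (a := a)
      (by rwa [heq s hs hsd a])
    exact ⟨g, hg, a, hga⟩
  · exact fun g a b hab ha hb => eq_one_of_smul_eq_self_of_smul_eq_self horb hS heq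
      (fun s hs hsd => (hindis s hs hsd).le) hrank hab ha hb

end AS
end

section
/- Let (Ω,S) be an equivalenced scheme of valency k, let u,v ∈ S#, and let w ∈ D(u,v). Then for every class a of S contained in u*∘w and every class b of S contained in w*∘v, there is exactly one class of S contained in both a∘b and u*∘v. -/
open scoped Classical

namespace AS

variable {Ω : Type*}

set_option linter.unusedSectionVars false

section Stmt9Aux

variable [Fintype Ω] {S : Set (Set (Ω × Ω))}

private lemma exists_pt9 (hS : IsScheme S) {s : Set (Ω × Ω)} (hs : s ∈ S) (α : Ω) :
    ∃ β, (α, β) ∈ s := by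
  obtain ⟨⟨x, y⟩, hxy⟩ := hS.1.nonempty s hs
  have h1 : 0 < pNum s (conv s) (x, x) := by
    refine (Set.ncard_pos (Set.toFinite _)).mpr ⟨y, hxy, hxy⟩
  have h2 := hS.1.inter_indep s hs (conv s) (hS.1.conv_mem s hs) (diagRel Ω) hS.2
      (x, x) rfl (α, α) rfl
  rw [h2] at h1
  obtain ⟨β, hβ, -⟩ := (Set.ncard_pos (Set.toFinite _)).mp h1
  exact ⟨β, hβ⟩

private lemma class_eq9 (hS : IsScheme S) {s t : Set (Ω × Ω)} (hs : s ∈ S) (ht : t ∈ S)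
    {p : Ω × Ω} (hp : p ∈ s) (hp' : p ∈ t) : s = t :=
  hS.1.disjoint s hs t ht ⟨p, hp, hp'⟩

private lemma class_sub_comp9 (hS : IsScheme S) {r s t : Set (Ω × Ω)} (hr : r ∈ S) (hs : s ∈ S)
    (ht : t ∈ S) {p : Ω × Ω} (hp : p ∈ t) (hpc : p ∈ comp r s) : t ⊆ comp r s := by
  intro q hq
  have h1 : 0 < pNum r s p := by
    obtain ⟨z, h1, h2⟩ := hpc
    exact (Set.ncard_pos (Set.toFinite _)).mpr ⟨z, h1, h2⟩
  rw [hS.1.inter_indep r hr s hs t ht p hp q hq] at h1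
  obtain ⟨z, hz1, hz2⟩ := (Set.ncard_pos (Set.toFinite _)).mp h1
  exact ⟨z, hz1, hz2⟩

private lemma comp_mono9 {r r' s s' : Set (Ω × Ω)} (h : r ⊆ r') (h' : s ⊆ s') :
    comp r s ⊆ comp r' s' := by
  rintro p ⟨z, h1, h2⟩
  exact ⟨z, h h1, h' h2⟩

private lemma clash9 (hS : IsScheme S) {u v w : Set (Ω × Ω)} (hu : u ∈ S) (hv : v ∈ S)
    (hw : w ∈ splitting S u v) {x y : Ω}
    (h1 : (x, y) ∈ comp w (conv w))
    (h2 : (x, y) ∈ comp (comp u (conv u)) (comp v (conv v))) : x = y := by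
  obtain ⟨hw1, hwd, hwsp⟩ := hw
  obtain ⟨s, hsS, hxy⟩ := hS.1.cover (x, y)
  have hs1 : s ⊆ comp w (conv w) :=
    class_sub_comp9 hS hw1 (hS.1.conv_mem w hw1) hsS hxy h1
  obtain ⟨z, hz1, hz2⟩ := h2
  obtain ⟨c, hcS, hc⟩ := hS.1.cover (x, z)
  obtain ⟨d, hdS, hd⟩ := hS.1.cover (z, y)
  have hcsub : c ⊆ comp u (conv u) := class_sub_comp9 hS hu (hS.1.conv_mem u hu) hcS hc hz1
  have hdsub : d ⊆ comp v (conv v) := class_sub_comp9 hS hv (hS.1.conv_mem v hv) hdS hd hz2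
  have hs2 : s ⊆ comp (comp u (conv u)) (comp v (conv v)) :=
    (class_sub_comp9 hS hcS hdS hsS hxy ⟨z, hc, hd⟩).trans (comp_mono9 hcsub hdsub)
  have hsd := hwsp s hsS hs2 hs1
  rw [hsd] at hxy
  exact hxy

private lemma wv_unique9 (hS : IsScheme S) {u v w : Set (Ω × Ω)} (hu : u ∈ S) (hv : v ∈ S)
    (hw : w ∈ splitting S u v) {β β' ε ζ : Ω}
    (h1 : (β, ε) ∈ w) (h2 : (β', ε) ∈ w) (h3 : (β, ζ) ∈ v) (h4 : (β', ζ) ∈ v) : β = β' := by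
  obtain ⟨x, hx⟩ := exists_pt9 hS hu β
  exact clash9 hS hu hv hw ⟨ε, h1, h2⟩ ⟨β, ⟨x, hx, hx⟩, ⟨ζ, h3, h4⟩⟩

private lemma conv_ne_diag9 {w : Set (Ω × Ω)} (h : w ≠ diagRel Ω) : conv w ≠ diagRel Ω := by
  intro hc
  apply h
  have : conv (conv w) = conv (diagRel Ω) := by rw [hc]
  have h2 : conv (conv w) = w := rfl
  have h3 : conv (diagRel Ω) = diagRel Ω := by
    ext p; exact eq_comm
  rw [h2, h3] at this
  exact this

private lemma val_sub9 (hS : IsScheme S) {k : ℕ} (heq : IsEquivalenced S k)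
    {u v w b : Set (Ω × Ω)} (hu : u ∈ S) (hv : v ∈ S) (hw : w ∈ splitting S u v)
    (hb : b ∈ S) (hbv : b ⊆ comp (conv w) v) (ε : Ω) :
    (pointSet ε b).ncard = k := by
  by_cases hbd : b = diagRel Ω
  · subst hbd
    have hps : pointSet ε (diagRel Ω) = {ε} := by
      ext β
      simp [pointSet, diagRel, eq_comm]
    have hεε : (ε, ε) ∈ diagRel Ω := rfl
    obtain ⟨β₀, hβ₀w, hβ₀v⟩ := hbv hεε
    have hβ₀w' : (β₀, ε) ∈ w := hβ₀w
    have hwv : w = v := class_eq9 hS hw.1 hv hβ₀w' hβ₀v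
    have hcw : conv w ∈ S := hS.1.conv_mem w hw.1
    have hcwd : conv w ≠ diagRel Ω := conv_ne_diag9 hw.2.1
    have hF : (pointSet ε (conv w)).ncard = k := heq (conv w) hcw hcwd ε
    have hsub : (pointSet ε (conv w)).Subsingleton := by
      intro β hβ β' hβ'
      have hβw : (β, ε) ∈ w := hβ
      have hβ'w : (β', ε) ∈ w := hβ'
      have hβv : (β, ε) ∈ v := by rw [← hwv]; exact hβw
      have hβ'v : (β', ε) ∈ v := by rw [← hwv]; exact hβ'w
      exact wv_unique9 hS hu hv hw hβw hβ'w hβv hβ'v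
    obtain ⟨β₁, hβ₁⟩ := exists_pt9 hS hcw ε
    have hβ₁F : β₁ ∈ pointSet ε (conv w) := hβ₁
    rcases hsub.eq_empty_or_singleton with h | ⟨a, ha⟩
    · rw [h] at hβ₁F; exact absurd hβ₁F (Set.notMem_empty β₁)
    · rw [ha, Set.ncard_singleton] at hF
      rw [hps, Set.ncard_singleton]
      exact hF
  · exact heq b hb hbd ε

private lemma fiber_one9 (hS : IsScheme S) {k : ℕ} (heq : IsEquivalenced S k)
    {u v w b : Set (Ω × Ω)} (hu : u ∈ S) (hv : v ∈ S) (hw : w ∈ splitting S u v)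
    (hb : b ∈ S) (hbv : b ⊆ comp (conv w) v) {α ε : Ω} (hαε : (α, ε) ∈ w) :
    ∃! ζ, (ε, ζ) ∈ b ∧ (α, ζ) ∈ v := by
  classical
  have hw1 : w ∈ S := hw.1
  have hcw : conv w ∈ S := hS.1.conv_mem w hw1
  have hcwd : conv w ≠ diagRel Ω := conv_ne_diag9 hw.2.1
  set Yf : Finset Ω := (pointSet ε b).toFinset with hYf
  set Ff : Finset Ω := (pointSet ε (conv w)).toFinset with hFf
  let f : Ω → Ω := fun ζ => if h : ∃ β, (β, ε) ∈ w ∧ (β, ζ) ∈ v then h.choose else α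
  have hf : ∀ ζ, ∀ h : (∃ β, (β, ε) ∈ w ∧ (β, ζ) ∈ v), (f ζ, ε) ∈ w ∧ (f ζ, ζ) ∈ v := by
    intro ζ h
    have he : f ζ = h.choose := dif_pos h
    rw [he]
    exact h.choose_spec
  have hexb : ∀ ζ, (ε, ζ) ∈ b → ∃ β, (β, ε) ∈ w ∧ (β, ζ) ∈ v := by
    intro ζ hζ
    obtain ⟨β, hβ1, hβ2⟩ := hbv hζ
    exact ⟨β, hβ1, hβ2⟩
  have hmaps : ∀ ζ ∈ Yf, f ζ ∈ Ff := by
    intro ζ hζ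
    rw [hYf, Set.mem_toFinset] at hζ
    rw [hFf, Set.mem_toFinset]
    exact (hf ζ (hexb ζ hζ)).1
  have hsum := Finset.card_eq_sum_card_fiberwise hmaps
  have hfib : ∀ β ∈ Ff, (Yf.filter fun ζ => f ζ = β).card = pNum v (conv b) (α, ε) := by
    intro β hβ
    rw [hFf, Set.mem_toFinset] at hβ
    have hβw : (β, ε) ∈ w := hβ
    have hset : (Yf.filter fun ζ => f ζ = β)
        = ({ζ | (β, ζ) ∈ v ∧ (ζ, ε) ∈ conv b} : Set Ω).toFinset := by
      ext ζ
      rw [Finset.mem_filter, Set.mem_toFinset, Set.mem_toFinset]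
      constructor
      · rintro ⟨h1, h2⟩
        have h1' : (ε, ζ) ∈ b := h1
        have := hf ζ (hexb ζ h1')
        rw [h2] at this
        exact ⟨this.2, h1'⟩
      · rintro ⟨h1, h2⟩
        have h2' : (ε, ζ) ∈ b := h2
        refine ⟨h2', ?_⟩
        have hh := hf ζ (hexb ζ h2')
        exact wv_unique9 hS hu hv hw hh.1 hβw hh.2 h1
    rw [hset, ← Set.ncard_eq_toFinset_card']
    exact hS.1.inter_indep v hv (conv b) (hS.1.conv_mem b hb) w hw1 (β, ε) hβw (α, ε) hαε
  rw [Finset.sum_congr rfl hfib, Finset.sum_const, smul_eq_mul] at hsum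
  have hYk : Yf.card = k := by
    rw [hYf, ← Set.ncard_eq_toFinset_card']
    exact val_sub9 hS heq hu hv hw hb hbv ε
  have hFk : Ff.card = k := by
    rw [hFf, ← Set.ncard_eq_toFinset_card']
    exact heq (conv w) hcw hcwd ε
  have hkpos : 0 < k := by
    rw [← hYk, Finset.card_pos]
    obtain ⟨ζ, hζ⟩ := exists_pt9 hS hb ε
    exact ⟨ζ, by rw [hYf, Set.mem_toFinset]; exact hζ⟩
  rw [hYk, hFk] at hsum
  have hC : pNum v (conv b) (α, ε) = 1 := by
    have h2 : k * pNum v (conv b) (α, ε) = k * 1 := by rw [mul_one]; exact hsum.symm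
    exact Nat.eq_of_mul_eq_mul_left hkpos h2
  have hC' : ({ζ | (α, ζ) ∈ v ∧ (ζ, ε) ∈ conv b} : Set Ω).ncard = 1 := hC
  obtain ⟨ζ₀, hζ₀⟩ := Set.ncard_eq_one.mp hC'
  have hζ₀mem : ζ₀ ∈ ({ζ | (α, ζ) ∈ v ∧ (ζ, ε) ∈ conv b} : Set Ω) := by
    rw [hζ₀]; exact rfl
  refine ⟨ζ₀, ⟨hζ₀mem.2, hζ₀mem.1⟩, ?_⟩
  intro ζ hζ
  have : ζ ∈ ({ζ | (α, ζ) ∈ v ∧ (ζ, ε) ∈ conv b} : Set Ω) := ⟨hζ.2, hζ.1⟩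
  rw [hζ₀] at this
  exact this

end Stmt9Aux


theorem stmt_9 {Ω : Type*} [Fintype Ω] (S : Set (Set (Ω × Ω))) (hS : IsScheme S)
    (k : ℕ) (heq : IsEquivalenced S k)
    (u v : Set (Ω × Ω)) (hu : u ∈ S) (hu' : u ≠ diagRel Ω)
    (hv : v ∈ S) (hv' : v ≠ diagRel Ω)
    (w : Set (Ω × Ω)) (hw : w ∈ splitting S u v) :
    ∀ a ∈ S, a ⊆ comp (conv u) w → ∀ b ∈ S, b ⊆ comp (conv w) v →
      ∃! t : Set (Ω × Ω), t ∈ S ∧ t ⊆ comp a b ∧ t ⊆ comp (conv u) v := by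
  intro a ha hab b hb hbv
  obtain ⟨⟨δ, ε⟩, hδε⟩ := hS.1.nonempty a ha
  obtain ⟨α, hαδ, hαε⟩ := hab hδε
  have hαδ' : (α, δ) ∈ u := hαδ
  obtain ⟨ζ₀, hζ₀, hζ₀u⟩ := fiber_one9 hS heq hu hv hw hb hbv hαε
  obtain ⟨hζ₀b, hζ₀v⟩ := hζ₀
  obtain ⟨t₀, ht₀S, ht₀⟩ := hS.1.cover (δ, ζ₀)
  refine ⟨t₀, ⟨ht₀S, ?_, ?_⟩, ?_⟩
  · exact class_sub_comp9 hS ha hb ht₀S ht₀ ⟨ε, hδε, hζ₀b⟩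
  · exact class_sub_comp9 hS (hS.1.conv_mem u hu) hv ht₀S ht₀ ⟨α, hαδ, hζ₀v⟩
  · rintro t ⟨htS, htab, htuv⟩
    obtain ⟨⟨δ₁, ζ₁'⟩, ht1⟩ := hS.1.nonempty t htS
    obtain ⟨ε₁, hε₁a, hε₁b⟩ := htab ht1
    have hε₁a' : (ε₁, δ₁) ∈ conv a := hε₁a
    have hδε' : (ε, δ) ∈ conv a := hδε
    have hpos : 0 < pNum b (conv t) (ε, δ) := by
      have h1 : 0 < pNum b (conv t) (ε₁, δ₁) :=
        (Set.ncard_pos (Set.toFinite _)).mpr ⟨ζ₁', hε₁b, ht1⟩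
      rwa [hS.1.inter_indep b hb (conv t) (hS.1.conv_mem t htS) (conv a)
        (hS.1.conv_mem a ha) (ε₁, δ₁) hε₁a' (ε, δ) hδε'] at h1
    obtain ⟨ζ₁, hζ₁b, hζ₁t⟩ := (Set.ncard_pos (Set.toFinite _)).mp hpos
    have hζ₁t' : (δ, ζ₁) ∈ t := hζ₁t
    obtain ⟨γ, hγ1, hγ2⟩ := htuv hζ₁t'
    obtain ⟨β, hβ1, hβ2⟩ := hbv hζ₁b
    have hαβ : α = β := clash9 hS hu hv hw ⟨ε, hαε, hβ1⟩ ⟨γ, ⟨δ, hαδ', hγ1⟩, ⟨ζ₁, hγ2, hβ2⟩⟩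
    have hζv : (α, ζ₁) ∈ v := by rw [hαβ]; exact hβ2
    have hζeq : ζ₁ = ζ₀ := hζ₀u ζ₁ ⟨hζ₁b, hζv⟩
    rw [hζeq] at hζ₁t'
    exact class_eq9 hS htS ht₀S hζ₁t' ht₀

end AS
end

section
/- Let (Ω,S) be an equivalenced scheme of valency k, let α₀ ∈ Ω, and let u,v ∈ S# be such that for all w,w' ∈ D(u,v) the intersection D(u,w) ∩ D(u,w') ∩ D(v,w) ∩ D(v,w') is nonempty. Then for every w ∈ D(u,v) the set S(u,v;w) = {a∘b restricted as relations on Ω : a ∈ S(u,w), b ∈ S(w,v)} is a partition of α₀u × α₀v, and this partition does not depend on the choice of w ∈ D(u,v). Here S(x,y) = {s ∩ (α₀x × α₀y) : s a class of S contained in x*∘y}. -/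
open scoped Classical

namespace AS

variable {Ω : Type*}

-- ## Auxiliary development for Statement 10

section Stmt10Aux

set_option linter.unusedSectionVars false
set_option linter.unusedVariables false

variable {S : Set (Set (Ω × Ω))}

lemma comp_mono {A B C D : Set (Ω × Ω)} (h1 : A ⊆ C) (h2 : B ⊆ D) :
    comp A B ⊆ comp C D := by
  rintro p ⟨μ, h, h'⟩; exact ⟨μ, h1 h, h2 h'⟩

lemma conv_conv' (s : Set (Ω × Ω)) : conv (conv s) = s := rfl

lemma conv_diag' : conv (diagRel Ω) = diagRel Ω := by
  ext ⟨a, b⟩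
  simp only [conv, diagRel, Set.mem_setOf_eq]
  exact eq_comm

/-- The class of a pair. -/
noncomputable def cls (hCC : IsCC S) (p : Ω × Ω) : Set (Ω × Ω) := (hCC.cover p).choose

lemma cls_mem (hCC : IsCC S) (p : Ω × Ω) : cls hCC p ∈ S := (hCC.cover p).choose_spec.1

lemma mem_cls (hCC : IsCC S) (p : Ω × Ω) : p ∈ cls hCC p := (hCC.cover p).choose_spec.2

lemma pNum_pos_iff [Fintype Ω] {r s : Set (Ω × Ω)} {p : Ω × Ω} :
    0 < pNum r s p ↔ p ∈ comp r s := by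
  rw [pNum, Set.ncard_pos (Set.toFinite _)]
  exact Iff.rfl

/-- `A` is a union of classes of `S`. -/
def UC (S : Set (Set (Ω × Ω))) (A : Set (Ω × Ω)) : Prop :=
  ∀ p ∈ A, ∃ s ∈ S, p ∈ s ∧ s ⊆ A

lemma class_sub_of_UC (hCC : IsCC S) {t A : Set (Ω × Ω)} (ht : t ∈ S) (hA : UC S A)
    {p : Ω × Ω} (hp : p ∈ t) (hm : p ∈ A) : t ⊆ A := by
  obtain ⟨s, hs, hps, hsA⟩ := hA p hm
  exact (hCC.disjoint t ht s hs ⟨p, hp, hps⟩) ▸ hsA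

lemma UC_class {s : Set (Ω × Ω)} (hs : s ∈ S) : UC S s :=
  fun _ hp => ⟨s, hs, hp, subset_rfl⟩

lemma UC_comp [Fintype Ω] (hCC : IsCC S) {A B : Set (Ω × Ω)} (hA : UC S A) (hB : UC S B) :
    UC S (comp A B) := by
  rintro ⟨a, b⟩ ⟨μ, hμ1, hμ2⟩
  obtain ⟨d, hd, hpd, hdA⟩ := hA _ hμ1
  obtain ⟨g, hg, hpg, hgB⟩ := hB _ hμ2
  refine ⟨cls hCC (a, b), cls_mem hCC _, mem_cls hCC _, ?_⟩
  have h1 : (a, b) ∈ comp d g := ⟨μ, hpd, hpg⟩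
  have h2 : cls hCC (a, b) ⊆ comp d g := by
    intro q hq
    rw [← pNum_pos_iff]
    have h3 := hCC.inter_indep d hd g hg _ (cls_mem hCC (a, b)) q hq (a, b) (mem_cls hCC _)
    rw [h3, pNum_pos_iff]
    exact h1
  exact h2.trans (comp_mono hdA hgB)

lemma UC_conv (hCC : IsCC S) {A : Set (Ω × Ω)} (hA : UC S A) : UC S (conv A) := by
  rintro ⟨a, b⟩ hp
  obtain ⟨s, hs, hps, hsA⟩ := hA (b, a) hp
  exact ⟨conv s, hCC.conv_mem s hs, hps, fun q hq => hsA hq⟩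

lemma conv_sub {x z s : Set (Ω × Ω)} (hsub : s ⊆ comp (conv x) z) :
    conv s ⊆ comp (conv z) x := by
  rintro ⟨a, b⟩ hq
  obtain ⟨μ, h1, h2⟩ := hsub hq
  exact ⟨μ, h2, h1⟩

/-- shared `x`-successor plus shared `z`-successor forces equality. -/
def Rig (x z : Set (Ω × Ω)) : Prop :=
  ∀ ⦃α α' β δ : Ω⦄, (α, β) ∈ x → (α', β) ∈ x → (α, δ) ∈ z → (α', δ) ∈ z → α = α'

lemma Rig.symm {x z : Set (Ω × Ω)} (h : Rig x z) : Rig z x :=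
  fun _ _ _ _ h1 h2 h3 h4 => h h3 h4 h1 h2

variable [Fintype Ω] {k : ℕ}

lemma pointSet_nonempty (heq : IsEquivalenced S k) (hk : 0 < k)
    {s : Set (Ω × Ω)} (hs : s ∈ S) (α : Ω) : (pointSet α s).Nonempty := by
  by_cases hd : s = diagRel Ω
  · exact ⟨α, by simp [hd, pointSet, diagRel]⟩
  · have h2 : 0 < (pointSet α s).ncard := by rw [heq s hs hd α]; exact hk
    exact (Set.ncard_pos (Set.toFinite _)).mp h2

lemma rig_of_splitting (hS : IsScheme S) (heq : IsEquivalenced S k) (hk : 0 < k)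
    {x y z : Set (Ω × Ω)} (hx : x ∈ S) (hy : y ∈ S) (hz : z ∈ splitting S x y) :
    Rig x z ∧ Rig y z := by
  have hCC := hS.1
  obtain ⟨hzS, hzd, hco⟩ := hz
  have main : ∀ α α' : Ω, (α, α') ∈ comp (comp x (conv x)) (comp y (conv y)) →
      (α, α') ∈ comp z (conv z) → α = α' := by
    intro α α' hpad hzz
    have htS := cls_mem hCC (α, α')
    have h1 : cls hCC (α, α') ⊆ comp z (conv z) :=
      class_sub_of_UC hCC htS (UC_comp hCC (UC_class hzS) (UC_conv hCC (UC_class hzS)))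
        (mem_cls hCC _) hzz
    have h2 : cls hCC (α, α') ⊆ comp (comp x (conv x)) (comp y (conv y)) :=
      class_sub_of_UC hCC htS
        (UC_comp hCC (UC_comp hCC (UC_class hx) (UC_conv hCC (UC_class hx)))
          (UC_comp hCC (UC_class hy) (UC_conv hCC (UC_class hy))))
        (mem_cls hCC _) hpad
    have h3 := hco _ htS h2 h1
    have h4 := mem_cls hCC (α, α')
    rw [h3] at h4
    exact h4
  constructor
  · intro α α' β δ h1 h2 h3 h4
    obtain ⟨γ, hγ⟩ := pointSet_nonempty heq hk hy α'
    exact main α α' ⟨α', ⟨β, h1, h2⟩, ⟨γ, hγ, hγ⟩⟩ ⟨δ, h3, h4⟩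
  · intro α α' γ δ h1 h2 h3 h4
    obtain ⟨β, hβ⟩ := pointSet_nonempty heq hk hx α
    exact main α α' ⟨α, ⟨β, hβ, hβ⟩, ⟨γ, h1, h2⟩⟩ ⟨δ, h3, h4⟩

lemma splitting_comm (hCC : IsCC S) {u v w : Set (Ω × Ω)} (hw : w ∈ splitting S u v) :
    w ∈ splitting S v u := by
  obtain ⟨h1, h2, h3⟩ := hw
  refine ⟨h1, h2, fun t htS hsub hww => ?_⟩
  have h4 : conv t ⊆ comp (comp u (conv u)) (comp v (conv v)) := by
    rintro ⟨a, b⟩ hab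
    obtain ⟨μ, ⟨c, hc1, hc2⟩, ⟨d, hd1, hd2⟩⟩ := hsub hab
    exact ⟨μ, ⟨d, hd2, hd1⟩, ⟨c, hc2, hc1⟩⟩
  have h5 : conv t ⊆ comp w (conv w) := by
    rintro ⟨a, b⟩ hab
    obtain ⟨μ, hm1, hm2⟩ := hww hab
    exact ⟨μ, hm2, hm1⟩
  have h6 := h3 (conv t) (hCC.conv_mem t htS) h4 h5
  have h7 : t = conv (conv t) := (conv_conv' t).symm
  rw [h7, h6, conv_diag']

lemma splitting_conv (hS : IsScheme S) (heq : IsEquivalenced S k) (hk : 0 < k)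
    {x a b c : Set (Ω × Ω)} (hx : x ∈ S) (hc : c ∈ S)
    (ha : a ∈ splitting S x b) (hb : b ∈ splitting S x c) : b ∈ splitting S x a := by
  have hCC := hS.1
  obtain ⟨haS, _, hacond⟩ := ha
  obtain ⟨hbS, hbd, hbcond⟩ := hb
  refine ⟨hbS, hbd, fun t htS hsub hbb => ?_⟩
  obtain ⟨⟨π, ρ⟩, hpt⟩ := hCC.nonempty t htS
  obtain ⟨μ, hμ1, hμ2⟩ := hsub hpt
  by_cases hg : cls hCC (μ, ρ) = diagRel Ω
  · have hμρ : μ = ρ := by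
      have h := mem_cls hCC (μ, ρ); rw [hg] at h; exact h
    subst hμρ
    have ht1 : t ⊆ comp x (conv x) :=
      class_sub_of_UC hCC htS (UC_comp hCC (UC_class hx) (UC_conv hCC (UC_class hx))) hpt hμ1
    have ht2 : t ⊆ comp (comp x (conv x)) (comp c (conv c)) := by
      rintro ⟨α, β⟩ hq
      obtain ⟨γ, hγ⟩ := pointSet_nonempty heq hk hc β
      exact ⟨β, ht1 hq, ⟨γ, hγ, hγ⟩⟩
    exact hbcond t htS ht2 hbb
  · exfalso
    have hgS := cls_mem hCC (μ, ρ)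
    have hgaa : cls hCC (μ, ρ) ⊆ comp a (conv a) :=
      class_sub_of_UC hCC hgS (UC_comp hCC (UC_class haS) (UC_conv hCC (UC_class haS)))
        (mem_cls hCC _) hμ2
    have hdS := cls_mem hCC (π, μ)
    have hdxx : cls hCC (π, μ) ⊆ comp x (conv x) :=
      class_sub_of_UC hCC hdS (UC_comp hCC (UC_class hx) (UC_conv hCC (UC_class hx)))
        (mem_cls hCC _) hμ1
    have hgsub : cls hCC (μ, ρ) ⊆ comp (conv (cls hCC (π, μ))) t :=
      class_sub_of_UC hCC hgS (UC_comp hCC (UC_conv hCC (UC_class hdS)) (UC_class htS))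
        (mem_cls hCC _) ⟨π, mem_cls hCC (π, μ), hpt⟩
    have hconvd : conv (cls hCC (π, μ)) ⊆ comp x (conv x) := by
      rintro ⟨α, β⟩ hq
      obtain ⟨μ', h1', h2'⟩ := hdxx hq
      exact ⟨μ', h2', h1'⟩
    have hgfinal : cls hCC (μ, ρ) ⊆ comp (comp x (conv x)) (comp b (conv b)) :=
      hgsub.trans (comp_mono hconvd hbb)
    exact hg (hacond _ hgS hgfinal hgaa)

lemma size_class (heq : IsEquivalenced S k) {s : Set (Ω × Ω)}
    (hs : s ∈ S) (hsd : s ≠ diagRel Ω) :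
    (Set.toFinite s).toFinset.card = Fintype.card Ω * k := by
  rw [Finset.card_eq_sum_card_fiberwise (f := Prod.fst) (t := Finset.univ)
    (fun x _ => Finset.mem_univ _)]
  have hfib : ∀ α : Ω,
      ((Set.toFinite s).toFinset.filter (fun p => p.1 = α)).card = k := by
    intro α
    rw [← heq s hs hsd α, Set.ncard_eq_toFinset_card _ (Set.toFinite _)]
    apply Finset.card_bij (fun p _ => p.2)
    · intro p hp
      simp only [Finset.mem_filter, Set.Finite.mem_toFinset] at hp
      rw [Set.Finite.mem_toFinset]
      show (α, p.2) ∈ s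
      rw [← hp.2]
      exact hp.1
    · rintro ⟨a1, b1⟩ h1 ⟨a2, b2⟩ h2 h
      simp only [Finset.mem_filter, Set.Finite.mem_toFinset] at h1 h2
      simp only at h
      rw [h1.2, h2.2, h]
    · intro b hb
      rw [Set.Finite.mem_toFinset] at hb
      refine ⟨(α, b), ?_, rfl⟩
      simp only [Finset.mem_filter, Set.Finite.mem_toFinset]
      exact ⟨hb, trivial⟩
  rw [Finset.sum_congr rfl (fun α _ => hfib α), Finset.sum_const, Finset.card_univ,
    smul_eq_mul]

lemma matching_one (hS : IsScheme S) (heq : IsEquivalenced S k) (hk : 0 < k)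
    {x z s : Set (Ω × Ω)} (hx : x ∈ S) (hxd : x ≠ diagRel Ω)
    (hz : z ∈ S) (hzd : z ≠ diagRel Ω)
    (hR : Rig x z) (hs : s ∈ S) (hsub : s ⊆ comp (conv x) z)
    {α β : Ω} (hab : (α, β) ∈ x) : ∃! δ, (α, δ) ∈ z ∧ (β, δ) ∈ s := by
  have hCC := hS.1
  by_cases hsd : s = diagRel Ω
  · subst hsd
    have hxz : x = z := by
      obtain ⟨μ, h1, h2⟩ := hsub (show (β, β) ∈ diagRel Ω from rfl)
      exact hCC.disjoint x hx z hz ⟨(μ, β), h1, h2⟩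
    refine ⟨β, ⟨hxz ▸ hab, rfl⟩, ?_⟩
    rintro δ ⟨_, h2⟩
    exact (h2 : β = δ).symm
  · set T : Finset (Ω × Ω × Ω) := Finset.univ.filter
      (fun t => (t.1, t.2.1) ∈ x ∧ (t.1, t.2.2) ∈ z ∧ t.2 ∈ s) with hT
    have hmemT : ∀ t ∈ T, ((t.1, t.2.1) ∈ x ∧ (t.1, t.2.2) ∈ z ∧ t.2 ∈ s) := by
      intro t ht
      rw [hT, Finset.mem_filter] at ht
      exact ht.2
    have hTs : T.card = Fintype.card Ω * k := by
      rw [Finset.card_eq_sum_card_fiberwise (f := fun t => t.2)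
        (t := (Set.toFinite s).toFinset)
        (fun t ht => (Set.Finite.mem_toFinset _).mpr (hmemT t ht).2.2)]
      rw [← size_class heq hs hsd]
      rw [Finset.card_eq_sum_ones ((Set.toFinite s).toFinset)]
      apply Finset.sum_congr rfl
      intro p hp
      rw [Set.Finite.mem_toFinset] at hp
      obtain ⟨μ, hm1, hm2⟩ := hsub hp
      rw [Finset.card_eq_one]
      refine ⟨(μ, p), ?_⟩
      ext t
      simp only [Finset.mem_filter, Finset.mem_singleton, hT, Finset.mem_univ, true_and]
      constructor
      · rintro ⟨⟨h1, h2, h3⟩, h4⟩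
        have h5 : t.1 = μ := by
          apply hR (h4 ▸ h1) hm1 (h4 ▸ h2) hm2
        rw [← h4, ← h5]
      · rintro rfl
        exact ⟨⟨hm1, hm2, hp⟩, rfl⟩
    have hTx : T.card = (Fintype.card Ω * k) * pNum z (conv s) (α, β) := by
      rw [Finset.card_eq_sum_card_fiberwise (f := fun t => (t.1, t.2.1))
        (t := (Set.toFinite x).toFinset)
        (fun t ht => (Set.Finite.mem_toFinset _).mpr (hmemT t ht).1)]
      have hfib : ∀ pr ∈ (Set.toFinite x).toFinset,
          (T.filter (fun t => (t.1, t.2.1) = pr)).card = pNum z (conv s) pr := by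
        intro pr hpr
        rw [pNum, Set.ncard_eq_toFinset_card _ (Set.toFinite _)]
        apply Finset.card_bij (fun t _ => t.2.2)
        · intro t ht
          simp only [Finset.mem_filter, hT, Finset.mem_univ, true_and] at ht
          rw [Set.Finite.mem_toFinset]
          obtain ⟨⟨h1, h2, h3⟩, h4⟩ := ht
          refine ⟨h4 ▸ h2, ?_⟩
          show (pr.2, t.2.2) ∈ s
          rw [← h4]
          exact h3
        · rintro ⟨a1, b1, c1⟩ h1 ⟨a2, b2, c2⟩ h2 h
          simp only [Finset.mem_filter] at h1 h2
          have e1 := h1.2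
          have e2 := h2.2
          simp only at e1 e2 h
          rw [Prod.ext_iff] at e1 e2
          simp only at e1 e2
          rw [e1.1, e2.1, e1.2, e2.2, h]
        · intro μ hμ
          rw [Set.Finite.mem_toFinset] at hμ
          refine ⟨(pr.1, pr.2, μ), ?_, rfl⟩
          simp only [Finset.mem_filter, hT, Finset.mem_univ, true_and]
          rw [Set.Finite.mem_toFinset] at hpr
          exact ⟨⟨hpr, hμ.1, hμ.2⟩, trivial⟩
      rw [Finset.sum_congr rfl hfib]
      have hconst : ∀ pr ∈ (Set.toFinite x).toFinset,
          pNum z (conv s) pr = pNum z (conv s) (α, β) := by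
        intro pr hpr
        rw [Set.Finite.mem_toFinset] at hpr
        exact hCC.inter_indep z hz (conv s) (hCC.conv_mem s hs) x hx pr hpr (α, β) hab
      rw [Finset.sum_congr rfl hconst, Finset.sum_const, smul_eq_mul,
        size_class heq hx hxd]
    have hpos : 0 < Fintype.card Ω * k :=
      Nat.mul_pos (Fintype.card_pos_iff.mpr ⟨α⟩) hk
    have hone : pNum z (conv s) (α, β) = 1 := by
      have h := hTs.symm.trans hTx
      nlinarith [h]
    have hW : ({δ | (α, δ) ∈ z ∧ (β, δ) ∈ s} : Set Ω).ncard = 1 := hone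
    obtain ⟨d, hd⟩ := Set.ncard_eq_one.mp hW
    have hdW : d ∈ ({δ | (α, δ) ∈ z ∧ (β, δ) ∈ s} : Set Ω) := by rw [hd]; rfl
    refine ⟨d, hdW, ?_⟩
    intro y hy
    have hy' : y ∈ ({δ | (α, δ) ∈ z ∧ (β, δ) ∈ s} : Set Ω) := hy
    rw [hd] at hy'
    exact hy'

lemma matching_two (hS : IsScheme S) (heq : IsEquivalenced S k) (hk : 0 < k)
    {x z s : Set (Ω × Ω)} (hx : x ∈ S) (hxd : x ≠ diagRel Ω)
    (hz : z ∈ S) (hzd : z ≠ diagRel Ω)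
    (hR : Rig x z) (hs : s ∈ S) (hsub : s ⊆ comp (conv x) z)
    {α δ : Ω} (had : (α, δ) ∈ z) : ∃! β', (α, β') ∈ x ∧ (β', δ) ∈ s :=
  matching_one hS heq hk hz hzd hx hxd hR.symm (hS.1.conv_mem s hs) (conv_sub hsub) had

lemma lemT (hS : IsScheme S) (heq : IsEquivalenced S k) (hk : 0 < k) (α₀ : Ω)
    {x y z p q : Set (Ω × Ω)}
    (hx : x ∈ S) (hxd : x ≠ diagRel Ω) (hy : y ∈ S) (hyd : y ≠ diagRel Ω)
    (hz : z ∈ S) (hzd : z ≠ diagRel Ω)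
    (hRxy : Rig x y) (hRyz : Rig y z) (hRxz : Rig x z)
    (hysp : y ∈ splitting S x z)
    (hp : p ∈ S) (hpsub : p ⊆ comp (conv x) y)
    (hq : q ∈ S) (hqsub : q ⊆ comp (conv y) z) :
    ∃ r ∈ S, r ⊆ comp (conv x) z ∧
      comp (p ∩ (pointSet α₀ x ×ˢ pointSet α₀ y)) (q ∩ (pointSet α₀ y ×ˢ pointSet α₀ z))
        = r ∩ (pointSet α₀ x ×ˢ pointSet α₀ z) := by
  have hCC := hS.1
  obtain ⟨β₀, hβ₀⟩ := pointSet_nonempty heq hk hx α₀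
  obtain ⟨δ₀, ⟨hδ₀z, hδ₀p⟩, -⟩ := matching_one hS heq hk hx hxd hy hyd hRxy hp hpsub hβ₀
  obtain ⟨ζ₀, ⟨hζ₀, hζ₀q⟩, -⟩ := matching_one hS heq hk hy hyd hz hzd hRyz hq hqsub hδ₀z
  have hrS := cls_mem hCC (β₀, ζ₀)
  have hrsub : cls hCC (β₀, ζ₀) ⊆ comp (conv x) z :=
    class_sub_of_UC hCC hrS (UC_comp hCC (UC_conv hCC (UC_class hx)) (UC_class hz))
      (mem_cls hCC _) ⟨α₀, hβ₀, hζ₀⟩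
  have key : ∀ β' ζ'', (β', ζ'') ∈ cls hCC (β₀, ζ₀) → (α₀, β') ∈ x → (α₀, ζ'') ∈ z →
      ∃ δ', (α₀, δ') ∈ y ∧ (β', δ') ∈ p ∧ (δ', ζ'') ∈ q := by
    intro β' ζ'' hmem hβ' hζ''
    have hpos : 0 < pNum p q (β', ζ'') := by
      rw [hCC.inter_indep p hp q hq _ hrS _ hmem (β₀, ζ₀) (mem_cls hCC _), pNum_pos_iff]
      exact ⟨δ₀, hδ₀p, hζ₀q⟩
    obtain ⟨δ', hd1, hd2⟩ := pNum_pos_iff.mp hpos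
    obtain ⟨α₁, hα₁x, hα₁y⟩ := hpsub hd1
    obtain ⟨α₂, hα₂y, hα₂z⟩ := hqsub hd2
    have hm : cls hCC (α₁, α₂) = diagRel Ω := by
      apply hysp.2.2 _ (cls_mem hCC _)
      · apply class_sub_of_UC hCC (cls_mem hCC _)
          (UC_comp hCC (UC_comp hCC (UC_class hx) (UC_conv hCC (UC_class hx)))
            (UC_comp hCC (UC_class hz) (UC_conv hCC (UC_class hz))))
          (mem_cls hCC _)
        exact ⟨α₀, ⟨β', hα₁x, hβ'⟩, ⟨ζ'', hζ'', hα₂z⟩⟩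
      · apply class_sub_of_UC hCC (cls_mem hCC _)
          (UC_comp hCC (UC_class hy) (UC_conv hCC (UC_class hy))) (mem_cls hCC _)
        exact ⟨δ', hα₁y, hα₂y⟩
    have hα12 : α₁ = α₂ := by
      have h := mem_cls hCC (α₁, α₂); rw [hm] at h; exact h
    subst hα12
    have hα₁0 : α₁ = α₀ := hRxz hα₁x hβ' hα₂z hζ''
    subst hα₁0
    exact ⟨δ', hα₁y, hd1, hd2⟩
  refine ⟨cls hCC (β₀, ζ₀), hrS, hrsub, ?_⟩
  ext ⟨β', ζ'⟩
  constructor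
  · rintro ⟨δ', ⟨hd1, hrβ, hrδ⟩, ⟨hd2, hrδ', hrζ⟩⟩
    have hβx : (α₀, β') ∈ x := hrβ
    have hδy : (α₀, δ') ∈ y := hrδ
    have hζz : (α₀, ζ') ∈ z := hrζ
    obtain ⟨ζr, ⟨hζr1, hζr2⟩, -⟩ :=
      matching_one hS heq hk hx hxd hz hzd hRxz hrS hrsub hβx
    obtain ⟨δ'', hy'', hp'', hq''⟩ := key β' ζr hζr2 hβx hζr1
    have hu1 := matching_one hS heq hk hx hxd hy hyd hRxy hp hpsub hβx
    have hde : δ'' = δ' := hu1.unique ⟨hy'', hp''⟩ ⟨hδy, hd1⟩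
    subst hde
    have hu2 := matching_one hS heq hk hy hyd hz hzd hRyz hq hqsub hy''
    have hze : ζr = ζ' := hu2.unique ⟨hζr1, hq''⟩ ⟨hζz, hd2⟩
    subst hze
    exact ⟨hζr2, hβx, hζz⟩
  · rintro ⟨hmem, hβx, hζz⟩
    obtain ⟨δ', h1, h2, h3⟩ := key β' ζ' hmem hβx hζz
    exact ⟨δ', ⟨h2, hβx, h1⟩, ⟨h3, h1, hζz⟩⟩

lemma comp_mid (hS : IsScheme S) (heq : IsEquivalenced S k) (hk : 0 < k) (α₀ : Ω)
    {w e g : Set (Ω × Ω)}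
    (hw : w ∈ S) (hwd : w ≠ diagRel Ω) (he : e ∈ S) (hed : e ≠ diagRel Ω)
    (hR : Rig w e) (hg : g ∈ S) (hgsub : g ⊆ comp (conv w) e)
    {a b : Set (Ω × Ω)}
    (ha : ∀ p ∈ a, (α₀, p.2) ∈ w) (hb : ∀ p ∈ b, (α₀, p.1) ∈ w) :
    comp a b = comp (comp a (g ∩ (pointSet α₀ w ×ˢ pointSet α₀ e)))
      (comp (conv g ∩ (pointSet α₀ e ×ˢ pointSet α₀ w)) b) := by
  ext ⟨β, γ⟩
  constructor
  · rintro ⟨δ, h1, h2⟩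
    have hδw : (α₀, δ) ∈ w := ha _ h1
    obtain ⟨ε, ⟨hεe, hεg⟩, -⟩ := matching_one hS heq hk hw hwd he hed hR hg hgsub hδw
    exact ⟨ε, ⟨δ, h1, hεg, hδw, hεe⟩, ⟨δ, ⟨hεg, hεe, hδw⟩, h2⟩⟩
  · rintro ⟨ε, ⟨δ₁, ha1, hg1, hd1w, he1⟩, ⟨δ₂, ⟨hg2, he2, hd2w⟩, hb2⟩⟩
    have huniq := matching_two hS heq hk hw hwd he hed hR hg hgsub he1
    have hδ : δ₁ = δ₂ := huniq.unique ⟨hd1w, hg1⟩ ⟨hd2w, hg2⟩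
    exact ⟨δ₁, ha1, hδ ▸ hb2⟩

/-- The master lemma: two products through `w` and through `e` sharing a point coincide. -/
lemma master (hS : IsScheme S) (heq : IsEquivalenced S k) (hk : 0 < k) (α₀ : Ω)
    {u v w e : Set (Ω × Ω)}
    (hu : u ∈ S) (hu' : u ≠ diagRel Ω) (hv : v ∈ S) (hv' : v ≠ diagRel Ω)
    (hw : w ∈ splitting S u v) (he1 : e ∈ splitting S u w) (he2 : e ∈ splitting S v w)
    {a b c d : Set (Ω × Ω)}
    (hal : a ∈ localS S α₀ u w) (hbl : b ∈ localS S α₀ w v)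
    (hcl : c ∈ localS S α₀ u e) (hdl : d ∈ localS S α₀ e v)
    {β γ : Ω} (h1 : (β, γ) ∈ comp a b) (h2 : (β, γ) ∈ comp c d) :
    comp a b = comp c d := by
  have hCC := hS.1
  have hwS := hw.1
  have hwd := hw.2.1
  have heS := he1.1
  have hed := he1.2.1
  obtain ⟨hRuw, hRvw⟩ := rig_of_splitting hS heq hk hu hv hw
  obtain ⟨hRue, hRwe⟩ := rig_of_splitting hS heq hk hu hwS he1
  obtain ⟨hRve, -⟩ := rig_of_splitting hS heq hk hv hwS he2
  have hwue : w ∈ splitting S u e := splitting_conv hS heq hk hu hv he1 hw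
  have hwve : w ∈ splitting S v e :=
    splitting_conv hS heq hk hv hu he2 (splitting_comm hCC hw)
  have hwev : w ∈ splitting S e v := splitting_comm hCC hwve
  obtain ⟨sa, hsaS, hsasub, rfl⟩ := hal
  obtain ⟨sb, hsbS, hsbsub, rfl⟩ := hbl
  obtain ⟨sc, hscS, hscsub, rfl⟩ := hcl
  obtain ⟨sd, hsdS, hsdsub, rfl⟩ := hdl
  obtain ⟨δ, ⟨hδa, hβu, hδw⟩, ⟨hδb, -, hγv⟩⟩ := h1
  obtain ⟨ε, ⟨hεc, -, hεe⟩, ⟨hεd, -, -⟩⟩ := h2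
  have hgS := cls_mem hCC (δ, ε)
  have hgsub : cls hCC (δ, ε) ⊆ comp (conv w) e :=
    class_sub_of_UC hCC hgS (UC_comp hCC (UC_conv hCC (UC_class hwS)) (UC_class heS))
      (mem_cls hCC _) ⟨α₀, hδw, hεe⟩
  -- switch the middle from w to e
  have hmid := comp_mid hS heq hk α₀ hwS hwd heS hed hRwe hgS hgsub
    (a := sa ∩ (pointSet α₀ u ×ˢ pointSet α₀ w))
    (b := sb ∩ (pointSet α₀ w ×ˢ pointSet α₀ v))
    (fun p hp => hp.2.2) (fun p hp => hp.2.1)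
  -- identify the two factors
  obtain ⟨r₁, hr₁S, hr₁sub, hcomp1⟩ := lemT hS heq hk α₀ hu hu' hwS hwd heS hed
    hRuw hRwe hRue hwue hsaS hsasub hgS hgsub
  obtain ⟨r₂, hr₂S, hr₂sub, hcomp2⟩ := lemT hS heq hk α₀ heS hed hwS hwd hv hv'
    hRwe.symm hRvw.symm hRve.symm hwev (hCC.conv_mem _ hgS) (conv_sub hgsub) hsbS hsbsub
  -- (β, ε) belongs to the first factor, (ε, γ) to the second
  have hβε1 : (β, ε) ∈ r₁ ∩ (pointSet α₀ u ×ˢ pointSet α₀ e) := by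
    rw [← hcomp1]
    exact ⟨δ, ⟨hδa, hβu, hδw⟩, ⟨mem_cls hCC _, hδw, hεe⟩⟩
  have hεγ1 : (ε, γ) ∈ r₂ ∩ (pointSet α₀ e ×ˢ pointSet α₀ v) := by
    rw [← hcomp2]
    exact ⟨δ, ⟨mem_cls hCC _, hεe, hδw⟩, ⟨hδb, hδw, hγv⟩⟩
  have hscr : sc = r₁ := hCC.disjoint sc hscS r₁ hr₁S ⟨(β, ε), hεc, hβε1.1⟩
  have hsdr : sd = r₂ := hCC.disjoint sd hsdS r₂ hr₂S ⟨(ε, γ), hεd, hεγ1.1⟩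
  rw [hmid, hcomp1, hcomp2, hscr, hsdr]

end Stmt10Aux

theorem stmt_10 {Ω : Type*} [Fintype Ω] (S : Set (Set (Ω × Ω))) (hS : IsScheme S)
    (k : ℕ) (heq : IsEquivalenced S k) (α₀ : Ω)
    (u v : Set (Ω × Ω)) (hu : u ∈ S) (hu' : u ≠ diagRel Ω)
    (hv : v ∈ S) (hv' : v ≠ diagRel Ω)
    (hcond : ∀ w ∈ splitting S u v, ∀ w' ∈ splitting S u v,
      (splitting S u w ∩ splitting S u w' ∩ splitting S v w ∩ splitting S v w').Nonempty) :
    ∀ w ∈ splitting S u v,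
      IsPartitionOf (localSW S α₀ u v w) (pointSet α₀ u ×ˢ pointSet α₀ v) ∧
      ∀ w' ∈ splitting S u v, localSW S α₀ u v w = localSW S α₀ u v w' := by
  classical
  have hCC := hS.1
  have hk : 0 < k := by
    obtain ⟨⟨α, β⟩, hp⟩ := hCC.nonempty u hu
    have h := heq u hu hu' α
    have hne : (pointSet α u).Nonempty := ⟨β, hp⟩
    rw [← h]
    exact (Set.ncard_pos (Set.toFinite _)).mpr hne
  -- generic facts
  have subset_rect : ∀ w₁, w₁ ∈ splitting S u v →
      ∀ X ∈ localSW S α₀ u v w₁, X ⊆ pointSet α₀ u ×ˢ pointSet α₀ v := by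
    rintro w₁ hw₁ X ⟨a, ⟨sa, hsaS, hsasub, rfl⟩, b, ⟨sb, hsbS, hsbsub, rfl⟩, rfl⟩
    rintro ⟨β, γ⟩ ⟨δ, h1, h2⟩
    exact ⟨h1.2.1, h2.2.2⟩
  have nonempty_elt : ∀ w₁, w₁ ∈ splitting S u v →
      ∀ X ∈ localSW S α₀ u v w₁, X.Nonempty := by
    rintro w₁ hw₁ X ⟨a, ⟨sa, hsaS, hsasub, rfl⟩, b, ⟨sb, hsbS, hsbsub, rfl⟩, rfl⟩
    obtain ⟨hRuw, hRvw⟩ := rig_of_splitting hS heq hk hu hv hw₁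
    obtain ⟨β₀, hβ₀⟩ := pointSet_nonempty heq hk hu α₀
    obtain ⟨δ, ⟨hδw, hδa⟩, -⟩ :=
      matching_one hS heq hk hu hu' hw₁.1 hw₁.2.1 hRuw hsaS hsasub hβ₀
    obtain ⟨γ, ⟨hγv, hγb⟩, -⟩ :=
      matching_one hS heq hk hw₁.1 hw₁.2.1 hv hv' hRvw.symm hsbS hsbsub hδw
    exact ⟨(β₀, γ), δ, ⟨hδa, hβ₀, hδw⟩, ⟨hγb, hδw, hγv⟩⟩
  -- canonical elements through a given middle point
  have canon : ∀ w₁, w₁ ∈ splitting S u v → ∀ β γ δ : Ω,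
      (α₀, β) ∈ u → (α₀, γ) ∈ v → (α₀, δ) ∈ w₁ →
      (cls hCC (β, δ) ∩ (pointSet α₀ u ×ˢ pointSet α₀ w₁)) ∈ localS S α₀ u w₁ ∧
      (cls hCC (δ, γ) ∩ (pointSet α₀ w₁ ×ˢ pointSet α₀ v)) ∈ localS S α₀ w₁ v ∧
      (β, γ) ∈ comp (cls hCC (β, δ) ∩ (pointSet α₀ u ×ˢ pointSet α₀ w₁))
        (cls hCC (δ, γ) ∩ (pointSet α₀ w₁ ×ˢ pointSet α₀ v)) := by
    intro w₁ hw₁ β γ δ hβ hγ hδ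
    refine ⟨⟨cls hCC (β, δ), cls_mem hCC _, ?_, rfl⟩,
      ⟨cls hCC (δ, γ), cls_mem hCC _, ?_, rfl⟩,
      ⟨δ, ⟨mem_cls hCC _, hβ, hδ⟩, ⟨mem_cls hCC _, hδ, hγ⟩⟩⟩
    · exact class_sub_of_UC hCC (cls_mem hCC _)
        (UC_comp hCC (UC_conv hCC (UC_class hu)) (UC_class hw₁.1))
        (mem_cls hCC _) ⟨α₀, hβ, hδ⟩
    · exact class_sub_of_UC hCC (cls_mem hCC _)
        (UC_comp hCC (UC_conv hCC (UC_class hw₁.1)) (UC_class hv))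
        (mem_cls hCC _) ⟨α₀, hδ, hγ⟩
  -- similarly for the e-side
  have canonE : ∀ e₁, e₁ ∈ S → ∀ β γ ε : Ω,
      (α₀, β) ∈ u → (α₀, γ) ∈ v → (α₀, ε) ∈ e₁ →
      (cls hCC (β, ε) ∩ (pointSet α₀ u ×ˢ pointSet α₀ e₁)) ∈ localS S α₀ u e₁ ∧
      (cls hCC (ε, γ) ∩ (pointSet α₀ e₁ ×ˢ pointSet α₀ v)) ∈ localS S α₀ e₁ v ∧
      (β, γ) ∈ comp (cls hCC (β, ε) ∩ (pointSet α₀ u ×ˢ pointSet α₀ e₁))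
        (cls hCC (ε, γ) ∩ (pointSet α₀ e₁ ×ˢ pointSet α₀ v)) := by
    intro e₁ he₁ β γ ε hβ hγ hε
    refine ⟨⟨cls hCC (β, ε), cls_mem hCC _, ?_, rfl⟩,
      ⟨cls hCC (ε, γ), cls_mem hCC _, ?_, rfl⟩,
      ⟨ε, ⟨mem_cls hCC _, hβ, hε⟩, ⟨mem_cls hCC _, hε, hγ⟩⟩⟩
    · exact class_sub_of_UC hCC (cls_mem hCC _)
        (UC_comp hCC (UC_conv hCC (UC_class hu)) (UC_class he₁))
        (mem_cls hCC _) ⟨α₀, hβ, hε⟩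
    · exact class_sub_of_UC hCC (cls_mem hCC _)
        (UC_comp hCC (UC_conv hCC (UC_class he₁)) (UC_class hv))
        (mem_cls hCC _) ⟨α₀, hε, hγ⟩
  intro w hw
  constructor
  · -- partition
    obtain ⟨e, he⟩ := hcond w hw w hw
    have he1 : e ∈ splitting S u w := he.1.1.1
    have he2 : e ∈ splitting S v w := he.1.2
    refine ⟨fun X hX => nonempty_elt w hw X hX, fun X hX => subset_rect w hw X hX, ?_, ?_⟩
    · -- cover
      rintro ⟨β, γ⟩ hβγ
      obtain ⟨δ₀, hδ₀⟩ := pointSet_nonempty heq hk hw.1 α₀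
      obtain ⟨hc1, hc2, hc3⟩ := canon w hw β γ δ₀ hβγ.1 hβγ.2 hδ₀
      exact ⟨_, ⟨_, hc1, _, hc2, rfl⟩, hc3⟩
    · -- disjointness
      rintro X hX Y hY ⟨⟨β, γ⟩, hXp, hYp⟩
      have hβγ := subset_rect w hw X hX hXp
      obtain ⟨ε₀, hε₀⟩ := pointSet_nonempty heq hk he1.1 α₀
      obtain ⟨hc1, hc2, hc3⟩ := canonE e he1.1 β γ ε₀ hβγ.1 hβγ.2 hε₀
      obtain ⟨a, haL, b, hbL, rfl⟩ := hX
      obtain ⟨a', haL', b', hbL', rfl⟩ := hY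
      have e1 := master hS heq hk α₀ hu hu' hv hv' hw he1 he2 haL hbL hc1 hc2 hXp hc3
      have e2 := master hS heq hk α₀ hu hu' hv hv' hw he1 he2 haL' hbL' hc1 hc2 hYp hc3
      rw [e1, e2]
  · -- independence of the middle
    intro w' hw'
    obtain ⟨e, he⟩ := hcond w hw w' hw'
    have he1 : e ∈ splitting S u w := he.1.1.1
    have he1' : e ∈ splitting S u w' := he.1.1.2
    have he2 : e ∈ splitting S v w := he.1.2
    have he2' : e ∈ splitting S v w' := he.2
    have main : ∀ w₁, ∀ hw₁ : w₁ ∈ splitting S u v, ∀ w₂, ∀ hw₂ : w₂ ∈ splitting S u v,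
        e ∈ splitting S u w₁ → e ∈ splitting S v w₁ →
        e ∈ splitting S u w₂ → e ∈ splitting S v w₂ →
        localSW S α₀ u v w₁ ⊆ localSW S α₀ u v w₂ := by
      intro w₁ hw₁ w₂ hw₂ hf1 hf2 hf3 hf4
      rintro X hX
      obtain ⟨⟨β, γ⟩, hXp⟩ := nonempty_elt w₁ hw₁ X hX
      have hβγ := subset_rect w₁ hw₁ X hX hXp
      obtain ⟨ε₀, hε₀⟩ := pointSet_nonempty heq hk hf1.1 α₀
      obtain ⟨hc1, hc2, hc3⟩ := canonE e hf1.1 β γ ε₀ hβγ.1 hβγ.2 hε₀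
      obtain ⟨δ₂, hδ₂⟩ := pointSet_nonempty heq hk hw₂.1 α₀
      obtain ⟨hd1, hd2, hd3⟩ := canon w₂ hw₂ β γ δ₂ hβγ.1 hβγ.2 hδ₂
      obtain ⟨a, haL, b, hbL, rfl⟩ := hX
      have e1 := master hS heq hk α₀ hu hu' hv hv' hw₁ hf1 hf2 haL hbL hc1 hc2 hXp hc3
      have e2 := master hS heq hk α₀ hu hu' hv hv' hw₂ hf3 hf4 hd1 hd2 hc1 hc2 hd3 hc3
      exact ⟨_, hd1, _, hd2, e1.trans e2.symm⟩
    exact Set.Subset.antisymm (main w hw w' hw' he1 he2 he1' he2')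
      (main w' hw' w hw he1' he2' he1 he2)

end AS
end
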